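/- Let M be a real symmetric 3×3 matrix, let v ∈ ℝ³ be a unit vector with M v = λ v, and let u₁, u₂, u₃ be an orthonormal basis of ℝ³. Then Σ_{i=1}^{3} Δ_M(u_i, v) = 2 (tr(M) − 2λ). Consequently, max_{i ∈ {1,2,3}} Δ_M(u_i, v) ≥ (2/3)(tr(M) − 2 λ_max(M)), where λ_max(M) denotes the largest eigenvalue of M. -/

import Mathlib

/-
Writing `A := M_v`, each term is `Δ_M(u, v) = tr(A) ‖u‖² − uᵀ A u`. Summed over an orthonormal
basis, `Σᵢ uᵢᵀ A uᵢ = tr(U A Uᵀ) = tr(A)` for the orthogonal matrix `U` with rows `uᵢ`, so the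
sum is `(3 − 1) tr(A)`; and `tr(A) = tr(M) − 2 vᵀ M v = tr(M) − 2λ`. The bound follows because the
maximum is at least the mean and `λ ≤ λ_max`.
-/

open Matrix

/-- `Δ_M(u, v) := uᵀ (tr(M_v) I₃ − M_v) u` where `M_v := M (I₃ − 2 v vᵀ)`. -/
noncomputable def DeltaM (M : Matrix (Fin 3) (Fin 3) ℝ) (u v : Fin 3 → ℝ) : ℝ :=
  u ⬝ᵥ ((M * (1 - (2 : ℝ) • vecMulVec v v)).trace • (1 : Matrix (Fin 3) (Fin 3) ℝ)
      - M * (1 - (2 : ℝ) • vecMulVec v v)).mulVec u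

section

variable {n R : Type*} [Fintype n] [DecidableEq n] [CommRing R]

theorem dotProduct_trace_smul_one_sub_mulVec (A : Matrix n n R) (u : n → R) :
    u ⬝ᵥ (A.trace • (1 : Matrix n n R) - A) *ᵥ u = A.trace * (u ⬝ᵥ u) - u ⬝ᵥ A *ᵥ u := by
  rw [sub_mulVec, dotProduct_sub, smul_mulVec, one_mulVec, dotProduct_smul, smul_eq_mul]

theorem sum_dotProduct_mulVec_eq_trace (A U : Matrix n n R) (hU : U * Uᵀ = 1) :
    ∑ i, U i ⬝ᵥ A *ᵥ U i = A.trace :=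
  calc ∑ i, U i ⬝ᵥ A *ᵥ U i = (U * A * Uᵀ).trace := by
        simp only [trace, diag, mul_apply, dotProduct, mulVec, transpose_apply, Finset.mul_sum,
          Finset.sum_mul]
        refine Finset.sum_congr rfl fun i _ => Finset.sum_comm.trans ?_
        exact Finset.sum_congr rfl fun _ _ => Finset.sum_congr rfl fun _ _ => by ring
    _ = (A * (Uᵀ * U)).trace := by rw [Matrix.mul_assoc, trace_mul_comm, Matrix.mul_assoc]
    _ = A.trace := by rw [mul_eq_one_comm.mp hU, Matrix.mul_one]

theorem sum_dotProduct_trace_smul_one_sub_mulVec (A U : Matrix n n R) (hU : U * Uᵀ = 1) :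
    ∑ i, U i ⬝ᵥ (A.trace • (1 : Matrix n n R) - A) *ᵥ U i
      = (Fintype.card n - 1) * A.trace := by
  have hunit (i : n) : U i ⬝ᵥ U i = 1 := by
    simpa [mul_apply'] using congrFun (congrFun hU i) i
  simp only [dotProduct_trace_smul_one_sub_mulVec, hunit, mul_one, Finset.sum_sub_distrib,
    sum_dotProduct_mulVec_eq_trace A U hU, Finset.sum_const, Finset.card_univ, nsmul_eq_mul]
  ring

theorem trace_mul_one_sub_two_smul_vecMulVec (M : Matrix n n R) {v : n → R} {lam : R}
    (hv : v ⬝ᵥ v = 1) (hev : M *ᵥ v = lam • v) :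
    (M * (1 - (2 : R) • vecMulVec v v)).trace = M.trace - 2 * lam := by
  rw [Matrix.mul_sub, Matrix.mul_one, Matrix.mul_smul, mul_vecMulVec, trace_sub, trace_smul,
    trace_vecMulVec, hev, smul_dotProduct, hv, smul_eq_mul, smul_eq_mul, mul_one]

end

theorem of_mul_transpose_eq_one_of_orthonormal {u₁ u₂ u₃ : Fin 3 → ℝ}
    (h₁ : u₁ ⬝ᵥ u₁ = 1) (h₂ : u₂ ⬝ᵥ u₂ = 1) (h₃ : u₃ ⬝ᵥ u₃ = 1)
    (h₁₂ : u₁ ⬝ᵥ u₂ = 0) (h₁₃ : u₁ ⬝ᵥ u₃ = 0) (h₂₃ : u₂ ⬝ᵥ u₃ = 0) :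
    of ![u₁, u₂, u₃] * (of ![u₁, u₂, u₃])ᵀ = 1 := by
  ext i j
  change ![u₁, u₂, u₃] i ⬝ᵥ ![u₁, u₂, u₃] j = _
  fin_cases i <;> fin_cases j <;> simp [dotProduct_comm, *]

theorem DeltaM_sum_orthonormal_general
    (M : Matrix (Fin 3) (Fin 3) ℝ)
    (v : Fin 3 → ℝ) (lam : ℝ) (hv : v ⬝ᵥ v = 1) (hev : M.mulVec v = lam • v)
    (u₁ u₂ u₃ : Fin 3 → ℝ)
    (h₁ : u₁ ⬝ᵥ u₁ = 1) (h₂ : u₂ ⬝ᵥ u₂ = 1) (h₃ : u₃ ⬝ᵥ u₃ = 1)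
    (h₁₂ : u₁ ⬝ᵥ u₂ = 0) (h₁₃ : u₁ ⬝ᵥ u₃ = 0) (h₂₃ : u₂ ⬝ᵥ u₃ = 0)
    (lamMax : ℝ)
    (hmax₂ : ∀ (w : Fin 3 → ℝ) (μ : ℝ), w ≠ 0 → M.mulVec w = μ • w → μ ≤ lamMax) :
    DeltaM M u₁ v + DeltaM M u₂ v + DeltaM M u₃ v = 2 * (M.trace - 2 * lam) ∧
    (2 / 3 : ℝ) * (M.trace - 2 * lamMax) ≤
      max (max (DeltaM M u₁ v) (DeltaM M u₂ v)) (DeltaM M u₃ v) := by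
  have hsum : DeltaM M u₁ v + DeltaM M u₂ v + DeltaM M u₃ v = 2 * (M.trace - 2 * lam) := by
    set A := M * (1 - (2 : ℝ) • vecMulVec v v)
    calc DeltaM M u₁ v + DeltaM M u₂ v + DeltaM M u₃ v
        = ∑ i, ![u₁, u₂, u₃] i ⬝ᵥ
            (A.trace • (1 : Matrix (Fin 3) (Fin 3) ℝ) - A) *ᵥ ![u₁, u₂, u₃] i := by
          simp [Fin.sum_univ_three, DeltaM, A]
      _ = (Fintype.card (Fin 3) - 1) * A.trace :=
          sum_dotProduct_trace_smul_one_sub_mulVec A (of ![u₁, u₂, u₃])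
            (of_mul_transpose_eq_one_of_orthonormal h₁ h₂ h₃ h₁₂ h₁₃ h₂₃)
      _ = 2 * (M.trace - 2 * lam) := by
          rw [trace_mul_one_sub_two_smul_vecMulVec M hv hev]; norm_num
  have hlam : lam ≤ lamMax := hmax₂ v lam (by rintro rfl; simp at hv) hev
  refine ⟨hsum, ?_⟩
  set Δmax := max (max (DeltaM M u₁ v) (DeltaM M u₂ v)) (DeltaM M u₃ v)
  have hΔ₁ : DeltaM M u₁ v ≤ Δmax := le_max_of_le_left (le_max_left _ _)
  have hΔ₂ : DeltaM M u₂ v ≤ Δmax := le_max_of_le_left (le_max_right _ _)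
  have hΔ₃ : DeltaM M u₃ v ≤ Δmax := le_max_right _ _
  linarith

/-- For a symmetric `M`, a unit eigenvector `v` with eigenvalue `λ`, and an orthonormal
basis `u₁, u₂, u₃` of `ℝ³`, `Σᵢ Δ_M(uᵢ, v) = 2(tr(M) − 2λ)`; consequently
`maxᵢ Δ_M(uᵢ, v) ≥ (2/3)(tr(M) − 2 λ_max(M))` where `λ_max(M)` is the largest
eigenvalue of `M`. -/
theorem DeltaM_sum_orthonormal
    (M : Matrix (Fin 3) (Fin 3) ℝ) (hMsym : M.IsSymm)
    (v : Fin 3 → ℝ) (lam : ℝ) (hv : v ⬝ᵥ v = 1) (hev : M.mulVec v = lam • v)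
    (u₁ u₂ u₃ : Fin 3 → ℝ)
    (h₁ : u₁ ⬝ᵥ u₁ = 1) (h₂ : u₂ ⬝ᵥ u₂ = 1) (h₃ : u₃ ⬝ᵥ u₃ = 1)
    (h₁₂ : u₁ ⬝ᵥ u₂ = 0) (h₁₃ : u₁ ⬝ᵥ u₃ = 0) (h₂₃ : u₂ ⬝ᵥ u₃ = 0)
    (lamMax : ℝ)
    (hmax₁ : ∃ w : Fin 3 → ℝ, w ⬝ᵥ w = 1 ∧ M.mulVec w = lamMax • w)
    (hmax₂ : ∀ (w : Fin 3 → ℝ) (μ : ℝ), w ≠ 0 → M.mulVec w = μ • w → μ ≤ lamMax) :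
    DeltaM M u₁ v + DeltaM M u₂ v + DeltaM M u₃ v = 2 * (M.trace - 2 * lam) ∧
    (2 / 3 : ℝ) * (M.trace - 2 * lamMax) ≤
      max (max (DeltaM M u₁ v) (DeltaM M u₂ v)) (DeltaM M u₃ v) :=
  DeltaM_sum_orthonormal_general M v lam hv hev u₁ u₂ u₃ h₁ h₂ h₃ h₁₂ h₁₃ h₂₃ lamMax hmax₂
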